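/- Let A be a finite nonempty set of real numbers and let P = {d ∈ A−A : r_{A−A}(d) ≥ |A|²/(2|A−A|)}. Then |A|⁶/4 ≤ E₃(A) · |{(d,d',d'') ∈ (A−A) × P × (A−A) : d'' = d − d'}|. -/

import Mathlib

open Finset Pointwise

/-- `rD A x` is the number of pairs `(a,b) ∈ A × A` with `a - b = x`. -/
noncomputable def rD (A : Finset ℝ) (x : ℝ) : ℕ :=
  ((A ×ˢ A).filter (fun q => q.1 - q.2 = x)).card

/-- The cubic energy `E₃(A) = Σ_x r_{A−A}(x)³` (only `x ∈ A - A` contribute). -/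
noncomputable def E3c (A : Finset ℝ) : ℕ :=
  ∑ x ∈ A - A, rD A x ^ 3

/-!
Let `Q` be the set of pairs `(a, b) ∈ A × A` whose difference is popular. Unpopular differences
carry at most `|A|² / 2` of the `|A|²` representations, so `|Q| ≥ |A|² / 2`. The map
`(a, b, c) ↦ (a - c, a - b, b - c)` sends `Q × A` into the set `T` of counted triples, so by
Cauchy–Schwarz `(|Q| |A|)² ≤ |T| · N`, where `N` counts pairs of points of `Q × A` with the same
image. Such a pair is `(a, b, c)`, `(a + x, b + x, c + x)` for a common shift `x`, hence
`N ≤ Σₓ r(x)³ = E₃(A)`.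
-/

lemma Finset.sum_sub_card_nsmul_le_sum_filter_le {ι R : Type*} [AddCommGroup R] [LinearOrder R]
    [IsOrderedAddMonoid R] (s : Finset ι) (f : ι → R) {c : R} (hc : 0 ≤ c) :
    ∑ i ∈ s, f i - #s • c ≤ ∑ i ∈ s with c ≤ f i, f i := by
  have hsmall : ∑ i ∈ s with ¬ c ≤ f i, f i ≤ #s • c :=
    calc ∑ i ∈ s with ¬ c ≤ f i, f i ≤ #{i ∈ s | ¬ c ≤ f i} • c :=
          sum_le_card_nsmul _ _ _ fun i hi => (not_le.1 (mem_filter.1 hi).2).le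
      _ ≤ #s • c := nsmul_le_nsmul_left hc (card_filter_le _ _)
  rw [← sum_filter_add_sum_filter_not s (fun i => c ≤ f i), sub_le_iff_le_add]
  exact add_le_add le_rfl hsmall

lemma Finset.card_sq_le_card_mul_card_collisions {α β : Type*} [DecidableEq β]
    {s : Finset α} {t : Finset β} {g : α → β} (hg : Set.MapsTo g s t) :
    #s ^ 2 ≤ #t * #{p ∈ s ×ˢ s | g p.1 = g p.2} := by
  have hfiber : ∀ b ∈ t,
      #{i ∈ s | g i = b} ^ 2 = #{p ∈ {p ∈ s ×ˢ s | g p.1 = g p.2} | g p.1 = b} := by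
    intro b _
    rw [sq, ← card_product]
    congr 1
    ext p
    simp only [mem_product, mem_filter]
    grind
  calc #s ^ 2 = (∑ b ∈ t, #{i ∈ s | g i = b}) ^ 2 := by rw [card_eq_sum_card_fiberwise hg]
    _ ≤ #t * ∑ b ∈ t, #{i ∈ s | g i = b} ^ 2 := sq_sum_le_card_mul_sum_sq
    _ = #t * #{p ∈ s ×ˢ s | g p.1 = g p.2} := by
      rw [sum_congr rfl hfiber, ← card_eq_sum_card_fiberwise]
      exact fun p hp => hg (mem_product.1 (mem_filter.1 hp).1).1

lemma sum_rD (A : Finset ℝ) (P : Finset ℝ) : ∑ d ∈ P, rD A d = #{q ∈ A ×ˢ A | q.1 - q.2 ∈ P} :=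
  sum_card_fiberwise_eq_card_filter _ _ _

lemma sum_rD_sub_self (A : Finset ℝ) : ∑ d ∈ A - A, rD A d = #A ^ 2 := by
  rw [sum_rD, filter_true_of_mem, card_product, sq]
  exact fun q hq => sub_mem_sub (mem_product.1 hq).1 (mem_product.1 hq).2

lemma card_sq_div_two_le_sum_popular_rD (A : Finset ℝ) :
    (#A : ℝ) ^ 2 / 2 ≤
      ∑ d ∈ A - A with (#A : ℝ) ^ 2 / (2 * #(A - A)) ≤ rD A d, (rD A d : ℝ) := by
  have hsplit := sum_sub_card_nsmul_le_sum_filter_le (A - A) (fun d => (rD A d : ℝ))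
    (c := (#A : ℝ) ^ 2 / (2 * #(A - A))) (by positivity)
  have htotal : ∑ d ∈ A - A, (rD A d : ℝ) = (#A : ℝ) ^ 2 := by exact_mod_cast sum_rD_sub_self A
  have hthreshold : #(A - A) • ((#A : ℝ) ^ 2 / (2 * #(A - A))) ≤ (#A : ℝ) ^ 2 / 2 := by
    rcases eq_or_ne (#(A - A) : ℝ) 0 with h | h
    · simp only [nsmul_eq_mul, h, zero_mul]
      positivity
    · rw [nsmul_eq_mul]
      exact le_of_eq (by field_simp)
  linarith

def diffTriple (x : (ℝ × ℝ) × ℝ) : (ℝ × ℝ) × ℝ :=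
  ((x.1.1 - x.2, x.1.1 - x.1.2), x.1.2 - x.2)

lemma card_collisions_diffTriple_le_E3c (A : Finset ℝ) {S : Finset ((ℝ × ℝ) × ℝ)}
    (hS : S ⊆ (A ×ˢ A) ×ˢ A) :
    #{p ∈ S ×ˢ S | diffTriple p.1 = diffTriple p.2} ≤ E3c A := by
  have hmaps : ∀ p ∈ {p ∈ S ×ˢ S | diffTriple p.1 = diffTriple p.2},
      p.1.1.1 - p.2.1.1 ∈ A - A := by
    rintro ⟨x, y⟩ hp
    obtain ⟨hx, hy⟩ := mem_product.1 (mem_filter.1 hp).1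
    exact sub_mem_sub (mem_product.1 (mem_product.1 (hS hx)).1).1
      (mem_product.1 (mem_product.1 (hS hy)).1).1
  rw [card_eq_sum_card_fiberwise hmaps, E3c]
  refine sum_le_sum fun d _ => ?_
  set R := {q ∈ A ×ˢ A | q.1 - q.2 = d}
  have hR : rD A d ^ 3 = #((R ×ˢ R) ×ˢ R) := by
    rw [card_product, card_product, rD]; ring
  rw [hR]
  -- a collision `(a, b, c), (a', b', c')` has `a - a' = b - b' = c - c' = d`
  refine card_le_card_of_injOn
    (fun p => (((p.1.1.1, p.2.1.1), (p.1.1.2, p.2.1.2)), (p.1.2, p.2.2))) ?_ ?_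
  · rintro ⟨⟨⟨a, b⟩, c⟩, ⟨⟨a', b'⟩, c'⟩⟩ hp
    obtain ⟨hpC, rfl⟩ := mem_filter.1 hp
    obtain ⟨hpS, hcoll⟩ := mem_filter.1 hpC
    obtain ⟨h, h'⟩ := mem_product.1 hpS
    have habc := hS h
    have habc' := hS h'
    simp only [diffTriple, Prod.mk.injEq] at hcoll
    simp only [mem_product] at habc habc'
    simp only [R, mem_coe, mem_product, mem_filter]
    exact ⟨⟨⟨⟨habc.1.1, habc'.1.1⟩, trivial⟩, ⟨habc.1.2, habc'.1.2⟩, by linarith⟩,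
      ⟨habc.2, habc'.2⟩, by linarith⟩
  · rintro ⟨⟨⟨a, b⟩, c⟩, ⟨⟨a', b'⟩, c'⟩⟩ - ⟨⟨⟨x, y⟩, z⟩, ⟨⟨x', y'⟩, z'⟩⟩ - h
    simp only [Prod.mk.injEq] at h ⊢
    tauto

theorem popular_triple_differences_general (A : Finset ℝ)
    (P : Finset ℝ)
    (hP : P = (A - A).filter
      (fun d => (A.card : ℝ) ^ 2 / (2 * ((A - A).card : ℝ)) ≤ (rD A d : ℝ))) :
    (A.card : ℝ) ^ 6 / 4 ≤
      (E3c A : ℝ) *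
        (((((A - A) ×ˢ P) ×ˢ (A - A)).filter
            (fun t => t.2 = t.1.1 - t.1.2)).card : ℝ) := by
  have hQ : (#A : ℝ) ^ 2 / 2 ≤ #{q ∈ A ×ˢ A | q.1 - q.2 ∈ P} := by
    rw [← sum_rD, Nat.cast_sum, hP]
    exact card_sq_div_two_le_sum_popular_rD A
  set Q := {q ∈ A ×ˢ A | q.1 - q.2 ∈ P}
  set T := (((A - A) ×ˢ P) ×ˢ (A - A)).filter (fun t => t.2 = t.1.1 - t.1.2)
  have hmaps : ∀ x ∈ Q ×ˢ A, diffTriple x ∈ T := by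
    rintro ⟨⟨a, b⟩, c⟩ h
    simp only [Q, mem_filter, mem_product] at h
    simp only [T, diffTriple, mem_filter, mem_product]
    exact ⟨⟨⟨sub_mem_sub h.1.1.1 h.2, h.1.2⟩, sub_mem_sub h.1.1.2 h.2⟩, by ring⟩
  calc (#A : ℝ) ^ 6 / 4 = ((#A : ℝ) ^ 2 / 2 * #A) ^ 2 := by ring
    _ ≤ (#(Q ×ˢ A) : ℝ) ^ 2 := by rw [card_product, Nat.cast_mul]; gcongr
    _ ≤ #T * #{p ∈ (Q ×ˢ A) ×ˢ (Q ×ˢ A) | diffTriple p.1 = diffTriple p.2} := by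
      exact_mod_cast card_sq_le_card_mul_card_collisions hmaps
    _ ≤ #T * E3c A := by
      gcongr
      exact card_collisions_diffTriple_le_E3c A (product_subset_product_left (filter_subset _ _))
    _ = _ := mul_comm _ _

theorem popular_triple_differences (A : Finset ℝ) (hA : A.Nonempty)
    (P : Finset ℝ)
    (hP : P = (A - A).filter
      (fun d => (A.card : ℝ) ^ 2 / (2 * ((A - A).card : ℝ)) ≤ (rD A d : ℝ))) :
    (A.card : ℝ) ^ 6 / 4 ≤
      (E3c A : ℝ) *
        (((((A - A) ×ˢ P) ×ˢ (A - A)).filter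
            (fun t => t.2 = t.1.1 - t.1.2)).card : ℝ) :=
  popular_triple_differences_general A P hP
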